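/- arXiv:math/0302309 — 2 statements merged into one kernel-verified Lean document; each statement's English description precedes it below -/
import Mathlib

section
/- Let (W,S) be a finite Coxeter system and suppose S = K₁ ⊔ K₂ is a disjoint union such that every element of K₁ commutes with every element of K₂ (so W = W_{K₁} × W_{K₂} internally). Let Φ_p denote the Solomon homomorphism of the Coxeter system (W_{K_p}, K_p), p = 1,2. If Φ_p(x_p)(y_p) = Φ_p(y_p)(x_p) for all x_p, y_p ∈ ΣW_{K_p} and p = 1,2, then Φ(x)(y) = Φ(y)(x) for all x,y ∈ ΣW. -/
open scoped Classical

variable {B : Type*} {W : Type*} [Group W] {M : CoxeterMatrix B}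

/-- The parabolic subgroup `W_I` generated by the simple reflections indexed by `I`. -/
def parabolic (cs : CoxeterSystem M W) (I : Set B) : Subgroup W :=
  Subgroup.closure (cs.simple '' I)

/-- `X_I`: minimal length coset representatives of `W / W_I`. -/
def minReps (cs : CoxeterSystem M W) (I : Set B) : Set W :=
  {w : W | ∀ i ∈ I, cs.length w < cs.length (w * cs.simple i)}

/-- `I ∼_W J`: the subsets of simple reflections are conjugate under `W`. -/
def ConjSubsets (cs : CoxeterSystem M W) (I J : Set B) : Prop :=
  ∃ w : W, (fun x => w * x * w⁻¹) '' (cs.simple '' I) = cs.simple '' J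

theorem conjSubsets_equivalence (cs : CoxeterSystem M W) : Equivalence (ConjSubsets cs) where
  refl I := ⟨1, by simp⟩
  symm := by
    rintro I J ⟨w, h⟩
    refine ⟨w⁻¹, ?_⟩
    rw [← h, Set.image_image]
    simp [mul_assoc]
  trans := by
    rintro I J K ⟨w, h⟩ ⟨v, h'⟩
    refine ⟨v * w, ?_⟩
    rw [← h', ← h]
    simp [Set.image_image, mul_assoc]

/-- The setoid of Coxeter classes. -/
def coxSetoid (cs : CoxeterSystem M W) : Setoid (Set B) :=
  ⟨ConjSubsets cs, conjSubsets_equivalence cs⟩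

/-- The set of Coxeter classes `Λ(W)`. -/
def CoxeterClass (cs : CoxeterSystem M W) := Quotient (coxSetoid cs)

/-- `C` is a conjugacy class of the parabolic subgroup `W_I`. -/
def IsConjClassOfParabolic (cs : CoxeterSystem M W) (I : Set B) (C : Set W) : Prop :=
  ∃ v ∈ parabolic cs I, C = {x : W | ∃ u ∈ parabolic cs I, u * v * u⁻¹ = x}

/-- `C` is an `I`-cuspidal class: a conjugacy class of `W_I` meeting no proper
parabolic subgroup of `W_I`. -/
def IsCuspidalClass (cs : CoxeterSystem M W) (I : Set B) (C : Set W) : Prop :=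
  IsConjClassOfParabolic cs I C ∧ ∀ K : Set B, K ⊂ I → C ∩ (parabolic cs K : Set W) = ∅

/-- `w` is an `I`-element: `C(w) ∩ W_I` is an `I`-cuspidal class. -/
def IsElementOf (cs : CoxeterSystem M W) (I : Set B) (w : W) : Prop :=
  IsCuspidalClass cs I ({x : W | IsConj w x} ∩ (parabolic cs I : Set W))

/-- The λ-set `C(λ)` of the Coxeter class of `I`: the set of `λ(I)`-elements. -/
def lambdaSet (cs : CoxeterSystem M W) (I : Set B) : Set W :=
  {w : W | ∃ J : Set B, ConjSubsets cs I J ∧ IsElementOf cs J w}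

/-- The λ-set of a Coxeter class. -/
def lambdaSetQ (cs : CoxeterSystem M W) (lam : CoxeterClass cs) : Set W :=
  {w : W | ∃ I : Set B, Quotient.mk (coxSetoid cs) I = lam ∧ IsElementOf cs I w}

/-- The induced character `1_{W_I}^W` of the trivial character of `W_I`,
as a `ℚ`-valued function on `W`. -/
noncomputable def indTriv (cs : CoxeterSystem M W) (I : Set B) : W → ℚ :=
  fun w => (Nat.card {g : W | g ∈ minReps cs I ∧ g⁻¹ * w * g ∈ parabolic cs I} : ℚ)


/-- `x_I = Σ_{w ∈ X_I} w`, an element of the group algebra `ℚW`. -/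
noncomputable def xElt [Fintype W] (cs : CoxeterSystem M W) (I : Set B) :
    MonoidAlgebra ℚ W :=
  ∑ w : W, if w ∈ minReps cs I then MonoidAlgebra.single w (1 : ℚ) else 0

/-- The Solomon descent algebra `ΣW`, the span of the `x_I`. -/
noncomputable def descentAlgebra [Fintype W] (cs : CoxeterSystem M W) :
    Submodule ℚ (MonoidAlgebra ℚ W) :=
  Submodule.span ℚ (Set.range (xElt cs))

/-- The scalar product on `ℚW` with `⟨w, g⟩ = 1` if `w = g⁻¹` and `0` otherwise. -/
noncomputable def groupAlgPairing [Fintype W] (x y : MonoidAlgebra ℚ W) : ℚ :=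
  ∑ w : W, x.coeff w * y.coeff w⁻¹

/-- The classical scalar product of class functions on `W`. -/
noncomputable def classInner (W : Type*) [Group W] [Fintype W] (f g : W → ℚ) : ℚ :=
  (∑ w : W, f w * g w) / (Fintype.card W : ℚ)

/-- The linear extension of a function on `W` to the group algebra `ℚW`. -/
noncomputable def extEval [Fintype W] (f : W → ℚ) (x : MonoidAlgebra ℚ W) : ℚ :=
  ∑ w : W, x.coeff w * f w

/-- `X^K_I = W_K ∩ X_I`: the minimal coset representatives of `W_K / W_I` for `I ⊆ K`. -/
def minRepsRel (cs : CoxeterSystem M W) (K I : Set B) : Set W :=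
  (parabolic cs K : Set W) ∩ minReps cs I

/-- The element `x^K_I = Σ_{w ∈ X^K_I} w` of the group algebra. -/
noncomputable def xEltRel [Fintype W] (cs : CoxeterSystem M W) (K I : Set B) :
    MonoidAlgebra ℚ W :=
  ∑ w : W, if w ∈ minRepsRel cs K I then MonoidAlgebra.single w (1 : ℚ) else 0

/-- The induced character `1_{W_I}^{W_K}` of the trivial character of `W_I` to `W_K`
(`I ⊆ K`), as a function on `W` (supported on the subgroup `W_K`). -/
noncomputable def indTrivRel (cs : CoxeterSystem M W) (K I : Set B) : W → ℚ :=
  fun w => (Nat.card {g : W | g ∈ minRepsRel cs K I ∧ g⁻¹ * w * g ∈ parabolic cs I} : ℚ)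

/-- The Solomon descent algebra `Σ W_K` of the parabolic Coxeter system `(W_K, K)`. -/
noncomputable def descentAlgebraRel [Fintype W] (cs : CoxeterSystem M W) (K : Set B) :
    Submodule ℚ (MonoidAlgebra ℚ W) :=
  Submodule.span ℚ {x : MonoidAlgebra ℚ W | ∃ I : Set B, I ⊆ K ∧ x = xEltRel cs K I}

/-!
The simple reflections of `K₁` commute with those of `K₂`, so `s ↦ s` on `K₁`, `s ↦ 1` on `K₂`
respects the Coxeter relations (the orders `m(s, t)` across the two sets are even), and
likewise with the roles swapped. The two resulting projections exhibit
`W = W_{K₁} × W_{K₂}` with additive length, so that `X_I = X^{K₁}_{I ∩ K₁} × X^{K₂}_{I ∩ K₂}`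
and `1_{W_I}^W` is the product of `1_{W_{I ∩ K₁}}^{W_{K₁}}` and `1_{W_{I ∩ K₂}}^{W_{K₂}}`.
Hence `Φ(x_I)(x_J)` is the product of the corresponding values for the two factors, which
are symmetric in `I, J` by hypothesis, and symmetry on the basis `x_I` extends bilinearly.

That `m(s, t)` is even for commuting `s ≠ t` uses that distinct simple reflections are distinct
elements of `W`, which is read off the geometric representation.
-/

namespace CoxeterMatrix

variable (M)

/-- `B(e_k, e_l)` for the standard bilinear form of the geometric representation;
`M k l = 0` encodes `m = ∞`. -/
noncomputable def stdForm (k l : B) : ℝ :=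
  if M k l = 0 then -1 else -Real.cos (Real.pi / M k l)

theorem stdForm_self (k : B) : M.stdForm k k = 1 := by
  simp [stdForm]

theorem stdForm_comm (k l : B) : M.stdForm k l = M.stdForm l k := by
  rw [stdForm, stdForm, M.symmetric k l]

noncomputable def stdFormLeft (k : B) : (B →₀ ℝ) →ₗ[ℝ] ℝ :=
  Finsupp.linearCombination ℝ (M.stdForm k)

theorem stdFormLeft_single (k l : B) (x : ℝ) :
    M.stdFormLeft k (Finsupp.single l x) = x * M.stdForm k l := by
  simp [stdFormLeft, Finsupp.linearCombination_single, smul_eq_mul]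

noncomputable def stdReflection (k : B) : Module.End ℝ (B →₀ ℝ) :=
  LinearMap.id - Finsupp.lsingle k ∘ₗ ((2 : ℝ) • M.stdFormLeft k)

theorem stdReflection_apply (k : B) (v : B →₀ ℝ) :
    M.stdReflection k v = v - (2 * M.stdFormLeft k v) • Finsupp.single k 1 := by
  simp [stdReflection]

theorem stdReflection_mul_self (k : B) : M.stdReflection k * M.stdReflection k = 1 := by
  refine LinearMap.ext fun v => ?_
  rw [Module.End.mul_apply, stdReflection_apply, stdReflection_apply, map_sub, map_smul,
    stdFormLeft_single, stdForm_self, Module.End.one_apply, smul_eq_mul]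
  module

theorem stdReflection_mul_stdReflection_apply (k l : B) (v : B →₀ ℝ) :
    (M.stdReflection k * M.stdReflection l) v =
      v - (2 * M.stdFormLeft k v - 4 * M.stdForm k l * M.stdFormLeft l v) • Finsupp.single k 1
        - (2 * M.stdFormLeft l v) • Finsupp.single l 1 := by
  rw [Module.End.mul_apply, stdReflection_apply, stdReflection_apply, map_sub, map_smul,
    stdFormLeft_single, smul_eq_mul]
  module

/-- On the plane spanned by `e_k, e_l`, `s_k s_l` is the rotation by `2θ`; this is its
closed form, scaled by `sin² θ` to avoid dividing. -/
theorem sin_sq_smul_stdReflection_mul_pow_apply {k l : B} {θ : ℝ}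
    (hkl : M.stdForm k l = -Real.cos θ) (v : B →₀ ℝ) (n : ℕ) :
    Real.sin θ ^ 2 • ((M.stdReflection k * M.stdReflection l) ^ n) v =
      Real.sin θ ^ 2 • v
        + ((M.stdFormLeft k v + Real.cos θ * M.stdFormLeft l v) * (Real.cos (2 * n * θ) - 1)
            - M.stdFormLeft l v * Real.sin θ * Real.sin (2 * n * θ)) • Finsupp.single k 1
        + ((M.stdFormLeft l v + Real.cos θ * M.stdFormLeft k v) * (Real.cos (2 * n * θ) - 1)
            + M.stdFormLeft k v * Real.sin θ * Real.sin (2 * n * θ)) • Finsupp.single l 1 := by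
  set c := Real.cos θ
  set s := Real.sin θ
  set α := M.stdFormLeft k v
  set β := M.stdFormLeft l v
  have hlk : M.stdForm l k = -c := by rw [stdForm_comm, hkl]
  induction n with
  | zero => simp
  | succ n ih =>
    set w := ((M.stdReflection k * M.stdReflection l) ^ n) v
    set C := Real.cos (2 * n * θ)
    set S := Real.sin (2 * n * θ)
    have hα : s ^ 2 * M.stdFormLeft k w = s ^ 2 * α + ((α + c * β) * (C - 1) - β * s * S)
        - c * ((β + c * α) * (C - 1) + α * s * S) := by
      have := congrArg (M.stdFormLeft k) ih
      simp only [map_add, map_smul, stdFormLeft_single, stdForm_self, hkl, smul_eq_mul] at this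
      linear_combination this
    have hβ : s ^ 2 * M.stdFormLeft l w = s ^ 2 * β - c * ((α + c * β) * (C - 1) - β * s * S)
        + ((β + c * α) * (C - 1) + α * s * S) := by
      have := congrArg (M.stdFormLeft l) ih
      simp only [map_add, map_smul, stdFormLeft_single, stdForm_self, hlk, smul_eq_mul] at this
      linear_combination this
    have hcos : Real.cos (2 * ↑(n + 1) * θ) = C * (2 * c ^ 2 - 1) - S * (2 * s * c) := by
      rw [show 2 * ((n + 1 : ℕ) : ℝ) * θ = 2 * n * θ + 2 * θ by push_cast; ring, Real.cos_add,
        Real.cos_two_mul, Real.sin_two_mul]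
    have hsin : Real.sin (2 * ↑(n + 1) * θ) = S * (2 * c ^ 2 - 1) + C * (2 * s * c) := by
      rw [show 2 * ((n + 1 : ℕ) : ℝ) * θ = 2 * n * θ + 2 * θ by push_cast; ring, Real.sin_add,
        Real.cos_two_mul, Real.sin_two_mul]
    have hsc : s ^ 2 + c ^ 2 = 1 := Real.sin_sq_add_cos_sq θ
    rw [pow_succ' (M.stdReflection k * M.stdReflection l), Module.End.mul_apply,
      stdReflection_mul_stdReflection_apply, hkl, smul_sub, smul_sub, ih, smul_smul, smul_smul,
      hcos, hsin]
    linear_combination (norm := module)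
      (-2 * hα - 4 * c * hβ + (2 * β * c * C - 2 * α - 4 * β * c) * hsc) • Finsupp.single k (1 : ℝ)
        + (-2 * hβ + (-2 * β - 2 * α * c * C) * hsc) • Finsupp.single l (1 : ℝ)

theorem stdReflection_mul_pow {k l : B} (hkl : k ≠ l) :
    (M.stdReflection k * M.stdReflection l) ^ M k l = 1 := by
  rcases eq_or_ne (M k l) 0 with h0 | h0
  · rw [h0, pow_zero]
  have hm : (2 : ℝ) ≤ M k l := by
    have := M.off_diagonal k l hkl
    exact_mod_cast (by omega : 2 ≤ M k l)
  set θ := Real.pi / M k l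
  have hsin : Real.sin θ ≠ 0 := (Real.sin_pos_of_pos_of_lt_pi (by positivity)
    (div_lt_self Real.pi_pos (by linarith))).ne'
  have hθ : 2 * ((M k l : ℕ) : ℝ) * θ = 2 * Real.pi := by
    rw [mul_assoc, mul_div_cancel₀ _ (by positivity)]
  refine LinearMap.ext fun v => smul_right_injective _ (pow_ne_zero 2 hsin) ?_
  change Real.sin θ ^ 2 • _ = Real.sin θ ^ 2 • _
  rw [sin_sq_smul_stdReflection_mul_pow_apply M (by rw [stdForm, if_neg h0]) v, hθ,
    Real.cos_two_pi, Real.sin_two_pi, Module.End.one_apply]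
  simp

theorem isLiftable_stdReflection : M.IsLiftable M.stdReflection := by
  intro k l
  rcases eq_or_ne k l with rfl | hkl
  · rw [M.diagonal, pow_one, stdReflection_mul_self]
  · exact M.stdReflection_mul_pow hkl

end CoxeterMatrix

namespace CoxeterSystem

variable (cs : CoxeterSystem M W)

theorem simple_injective : Function.Injective cs.simple := by
  intro i j h
  by_contra hij
  have hρ := congrArg (fun w => cs.lift ⟨_, M.isLiftable_stdReflection⟩ w (Finsupp.single i 1) i) h
  simp only [lift_apply_simple, CoxeterMatrix.stdReflection_apply,
    CoxeterMatrix.stdFormLeft_single, CoxeterMatrix.stdForm_self, Finsupp.sub_apply,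
    Finsupp.smul_apply, Finsupp.single_eq_same, Finsupp.single_eq_of_ne hij] at hρ
  norm_num at hρ

theorem even_of_commute {i j : B} (hij : i ≠ j) (h : Commute (cs.simple i) (cs.simple j)) :
    Even (M i j) := by
  refine Nat.not_odd_iff_even.mp fun ⟨t, ht⟩ => hij (cs.simple_injective ?_)
  have hsq : (cs.simple i * cs.simple j) ^ 2 = 1 := by
    rw [(h.mul_pow 2), cs.simple_sq, cs.simple_sq, one_mul]
  have := cs.simple_mul_simple_pow i j
  rw [ht, pow_succ, pow_mul, hsq, one_pow, one_mul, mul_eq_one_iff_eq_inv, inv_simple] at this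
  exact this

end CoxeterSystem

theorem parabolic_mono (cs : CoxeterSystem M W) {I J : Set B} (h : I ⊆ J) :
    parabolic cs I ≤ parabolic cs J :=
  Subgroup.closure_mono (Set.image_mono h)

theorem simple_mem_parabolic (cs : CoxeterSystem M W) {I : Set B} {i : B} (hi : i ∈ I) :
    cs.simple i ∈ parabolic cs I :=
  Subgroup.subset_closure ⟨i, hi, rfl⟩

theorem parabolic_univ (cs : CoxeterSystem M W) : parabolic cs Set.univ = ⊤ := by
  rw [parabolic, Set.image_univ, cs.subgroup_closure_range_simple]

theorem parabolic_empty (cs : CoxeterSystem M W) : parabolic cs ∅ = ⊥ := by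
  rw [parabolic, Set.image_empty, Subgroup.closure_empty]

theorem Subgroup.sum_coe_sort_of_support {G β : Type*} [Group G] [Fintype G] [AddCommMonoid β]
    {H : Subgroup G} (F : G → β) (hF : ∀ g ∉ H, F g = 0) :
    ∑ u : H, F u = ∑ g, F g := by
  rw [← Fintype.sum_subtype_add_sum_subtype (· ∈ H) F,
    Fintype.sum_eq_zero (fun g : {g // g ∉ H} => F g) fun g => hF g g.2, add_zero]

namespace CoxeterSystem

variable (cs : CoxeterSystem M W)

/-- `S = K ⊔ L` with `K` and `L` commuting, so that `W = W_K × W_L`. -/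
structure IsProductSplitting (K L : Set B) : Prop where
  isCompl : IsCompl K L
  commute : ∀ i ∈ K, ∀ j ∈ L, Commute (cs.simple i) (cs.simple j)

namespace IsProductSplitting

variable {cs} {K L : Set B} (h : IsProductSplitting cs K L)
include h

theorem symm : IsProductSplitting cs L K :=
  ⟨h.isCompl.symm, fun i hi j hj => (h.commute j hj i hi).symm⟩

theorem mem_right_of_notMem {i : B} (hi : i ∉ K) : i ∈ L :=
  h.isCompl.compl_eq ▸ hi

theorem notMem_right {i : B} (hi : i ∈ K) : i ∉ L :=
  Set.disjoint_left.mp h.isCompl.disjoint hi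

theorem isLiftable : M.IsLiftable (fun k => if k ∈ K then cs.simple k else 1) := by
  intro k l
  by_cases hk : k ∈ K <;> by_cases hl : l ∈ K <;> simp only [hk, hl, if_true, if_false,
    mul_one, one_mul, one_pow]
  · exact cs.simple_mul_simple_pow k l
  · obtain ⟨t, ht⟩ := cs.even_of_commute (by rintro rfl; exact hl hk)
      (h.commute k hk l (h.mem_right_of_notMem hl))
    rw [ht, ← two_mul, pow_mul, cs.simple_sq, one_pow]
  · obtain ⟨t, ht⟩ := cs.even_of_commute (by rintro rfl; exact hk hl)
      (h.commute l hl k (h.mem_right_of_notMem hk))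
    rw [M.symmetric, ht, ← two_mul, pow_mul, cs.simple_sq, one_pow]

noncomputable def proj : W →* W :=
  cs.lift ⟨_, h.isLiftable⟩

theorem proj_simple (k : B) : h.proj (cs.simple k) = if k ∈ K then cs.simple k else 1 :=
  cs.lift_apply_simple h.isLiftable k

theorem proj_simple_of_mem {k : B} (hk : k ∈ K) : h.proj (cs.simple k) = cs.simple k := by
  rw [proj_simple, if_pos hk]

theorem proj_simple_of_mem_right {k : B} (hk : k ∈ L) : h.proj (cs.simple k) = 1 := by
  rw [proj_simple, if_neg (h.symm.notMem_right hk)]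

theorem proj_wordProd (ω : List B) :
    h.proj (cs.wordProd ω) = cs.wordProd (ω.filter (· ∈ K)) := by
  induction ω with
  | nil => simp
  | cons k ω ih =>
    by_cases hk : k ∈ K <;> simp [wordProd_cons, hk, proj_simple, ih]

theorem proj_mem_parabolic_inter {I : Set B} {w : W} (hw : w ∈ parabolic cs I) :
    h.proj w ∈ parabolic cs (I ∩ K) := by
  suffices (parabolic cs I).map h.proj ≤ parabolic cs (I ∩ K) from this ⟨w, hw, rfl⟩
  rw [parabolic, MonoidHom.map_closure, Subgroup.closure_le]
  rintro _ ⟨_, ⟨k, hk, rfl⟩, rfl⟩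
  rw [proj_simple]
  split_ifs with hkK
  · exact simple_mem_parabolic cs ⟨hk, hkK⟩
  · exact one_mem _

theorem proj_mem_parabolic (w : W) : h.proj w ∈ parabolic cs K := by
  simpa using h.proj_mem_parabolic_inter (I := Set.univ) (by rw [parabolic_univ]; trivial)

theorem proj_of_mem_parabolic {u : W} (hu : u ∈ parabolic cs K) : h.proj u = u := by
  suffices parabolic cs K ≤ MonoidHom.eqLocus h.proj (MonoidHom.id W) from this hu
  rw [parabolic, Subgroup.closure_le]
  rintro _ ⟨k, hk, rfl⟩
  exact h.proj_simple_of_mem hk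

theorem proj_of_mem_parabolic_right {v : W} (hv : v ∈ parabolic cs L) : h.proj v = 1 := by
  have := h.proj_mem_parabolic_inter hv
  rwa [Set.disjoint_iff_inter_eq_empty.mp h.isCompl.symm.disjoint, parabolic_empty,
    Subgroup.mem_bot] at this

theorem proj_mul {u v : W} (hu : u ∈ parabolic cs K) (hv : v ∈ parabolic cs L) :
    h.proj (u * v) = u := by
  rw [map_mul, h.proj_of_mem_parabolic hu, h.proj_of_mem_parabolic_right hv, mul_one]

theorem parabolic_le_centralizer :
    parabolic cs L ≤ Subgroup.centralizer (parabolic cs K) := by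
  rw [parabolic, parabolic, Subgroup.centralizer_closure, Subgroup.closure_le]
  rintro _ ⟨j, hj, rfl⟩ _ ⟨i, hi, rfl⟩
  exact (h.commute i hi j hj).eq

theorem commute_of_mem_parabolic {u v : W} (hu : u ∈ parabolic cs K)
    (hv : v ∈ parabolic cs L) : Commute u v :=
  h.parabolic_le_centralizer hv u hu

theorem proj_mul_proj_symm (w : W) : h.proj w * h.symm.proj w = w := by
  induction w using cs.simple_induction_left with
  | one => simp
  | mul_simple_left w i ih =>
    rw [map_mul, map_mul]
    by_cases hi : i ∈ K
    · rw [h.proj_simple_of_mem hi, h.symm.proj_simple_of_mem_right hi, one_mul, mul_assoc, ih]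
    · have hiL := h.mem_right_of_notMem hi
      rw [h.proj_simple_of_mem_right hiL, h.symm.proj_simple_of_mem hiL, one_mul, ← mul_assoc,
        (h.commute_of_mem_parabolic (h.proj_mem_parabolic w)
          (simple_mem_parabolic cs hiL)).eq, mul_assoc, ih]

theorem length_proj_add_length_proj_symm (w : W) :
    cs.length (h.proj w) + cs.length (h.symm.proj w) = cs.length w := by
  apply le_antisymm
  · obtain ⟨ω, hω, rfl⟩ := cs.exists_isReduced w
    have hfilter : ω.filter (· ∈ L) = ω.filter (fun k => !decide (k ∈ K)) :=
      List.filter_congr fun k _ => by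
        by_cases hk : k ∈ K <;> simp [hk, h.notMem_right, h.mem_right_of_notMem]
    rw [h.proj_wordProd, h.symm.proj_wordProd, hω.eq, List.length_eq_length_filter_add
      (fun k => decide (k ∈ K)), hfilter]
    exact add_le_add (cs.length_wordProd_le _) (cs.length_wordProd_le _)
  · simpa [h.proj_mul_proj_symm] using cs.length_mul_le (h.proj w) (h.symm.proj w)

theorem length_lt_length_mul_simple_iff {i : B} (hi : i ∈ K) (w : W) :
    cs.length w < cs.length (w * cs.simple i) ↔
      cs.length (h.proj w) < cs.length (h.proj w * cs.simple i) := by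
  have hw := h.length_proj_add_length_proj_symm w
  have hws := h.length_proj_add_length_proj_symm (w * cs.simple i)
  rw [map_mul, map_mul, h.proj_simple_of_mem hi, h.symm.proj_simple_of_mem_right hi,
    mul_one] at hws
  omega

theorem mem_parabolic_iff {I : Set B} (w : W) :
    w ∈ parabolic cs I ↔
      h.proj w ∈ parabolic cs (I ∩ K) ∧ h.symm.proj w ∈ parabolic cs (I ∩ L) := by
  refine ⟨fun hw => ⟨h.proj_mem_parabolic_inter hw, h.symm.proj_mem_parabolic_inter hw⟩,
    fun ⟨hK, hL⟩ => ?_⟩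
  rw [← h.proj_mul_proj_symm w]
  exact mul_mem (parabolic_mono cs Set.inter_subset_left hK)
    (parabolic_mono cs Set.inter_subset_left hL)

theorem mem_minReps_iff {I : Set B} (w : W) :
    w ∈ minReps cs I ↔
      h.proj w ∈ minRepsRel cs K (I ∩ K) ∧ h.symm.proj w ∈ minRepsRel cs L (I ∩ L) := by
  simp only [minRepsRel, minReps, Set.mem_inter_iff, Set.mem_ofPred_eq, SetLike.mem_coe,
    h.proj_mem_parabolic, h.symm.proj_mem_parabolic, true_and]
  constructor
  · intro hw
    exact ⟨fun i hi => (h.length_lt_length_mul_simple_iff hi.2 w).mp (hw i hi.1),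
      fun i hi => (h.symm.length_lt_length_mul_simple_iff hi.2 w).mp (hw i hi.1)⟩
  · rintro ⟨hK, hL⟩ i hi
    by_cases hiK : i ∈ K
    · exact (h.length_lt_length_mul_simple_iff hiK w).mpr (hK i ⟨hi, hiK⟩)
    · have hiL := h.mem_right_of_notMem hiK
      exact (h.symm.length_lt_length_mul_simple_iff hiL w).mpr (hL i ⟨hi, hiL⟩)

noncomputable def prodEquiv : W ≃ parabolic cs K × parabolic cs L where
  toFun w := (⟨h.proj w, h.proj_mem_parabolic w⟩, ⟨h.symm.proj w, h.symm.proj_mem_parabolic w⟩)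
  invFun p := p.1 * p.2
  left_inv := h.proj_mul_proj_symm
  right_inv p := by
    ext
    · exact h.proj_mul p.1.2 p.2.2
    · change h.symm.proj (p.1.1 * p.2.1) = p.2.1
      rw [(h.commute_of_mem_parabolic p.1.2 p.2.2).eq]
      exact h.symm.proj_mul p.2.2 p.1.2

theorem sum_proj_mul_proj_symm [Fintype W] {β : Type*} [CommSemiring β] (F G : W → β)
    (hF : ∀ w ∉ parabolic cs K, F w = 0) (hG : ∀ w ∉ parabolic cs L, G w = 0) :
    ∑ w, F (h.proj w) * G (h.symm.proj w) = (∑ w, F w) * ∑ w, G w := by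
  rw [Fintype.sum_equiv h.prodEquiv (fun w => F (h.proj w) * G (h.symm.proj w))
      (fun p => F p.1 * G p.2) fun w => rfl,
    Fintype.sum_prod_type, ← Subgroup.sum_coe_sort_of_support F hF,
    ← Subgroup.sum_coe_sort_of_support G hG, Finset.sum_mul_sum]

end IsProductSplitting

end CoxeterSystem

theorem natCard_setOf_eq_sum_ite {α : Type*} [Fintype α] (p : α → Prop) :
    (Nat.card {a | p a} : ℚ) = ∑ a, if p a then 1 else 0 := by
  simp [Nat.card_eq_fintype_card, Fintype.card_subtype, Finset.sum_boole]

theorem coeff_sum_ite_single [Fintype W] (R : Set W) (v : W) :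
    (∑ w : W, if w ∈ R then MonoidAlgebra.single w (1 : ℚ) else 0).coeff v =
      if v ∈ R then 1 else 0 := by
  rw [MonoidAlgebra.coeff_sum, Finset.sum_apply', Finset.sum_eq_single v]
  · split_ifs <;> simp
  · intro w _ hwv
    split_ifs <;> simp [hwv]
  · simp

theorem xElt_coeff [Fintype W] (cs : CoxeterSystem M W) (I : Set B) (v : W) :
    (xElt cs I).coeff v = if v ∈ minReps cs I then 1 else 0 :=
  coeff_sum_ite_single _ v

theorem xEltRel_coeff [Fintype W] (cs : CoxeterSystem M W) (K I : Set B) (v : W) :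
    (xEltRel cs K I).coeff v = if v ∈ minRepsRel cs K I then 1 else 0 :=
  coeff_sum_ite_single _ v

namespace CoxeterSystem.IsProductSplitting

variable [Fintype W] {cs : CoxeterSystem M W} {K L : Set B} (h : IsProductSplitting cs K L)
include h

theorem indTriv_eq_mul (I : Set B) (w : W) :
    indTriv cs I w =
      indTrivRel cs K (I ∩ K) (h.proj w) * indTrivRel cs L (I ∩ L) (h.symm.proj w) := by
  simp only [indTriv, indTrivRel, natCard_setOf_eq_sum_ite]
  refine Eq.trans (Finset.sum_congr rfl fun g _ => ?_) (h.sum_proj_mul_proj_symm _ _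
    (fun g hg => if_neg fun hc => hg hc.1.1) (fun g hg => if_neg fun hc => hg hc.1.1))
  rw [ite_zero_mul_ite_zero, one_mul, h.mem_minReps_iff, h.mem_parabolic_iff]
  simp only [map_mul, map_inv, and_and_and_comm]

theorem extEval_indTriv_xElt (I J : Set B) :
    extEval (indTriv cs I) (xElt cs J) =
      extEval (indTrivRel cs K (I ∩ K)) (xEltRel cs K (J ∩ K)) *
        extEval (indTrivRel cs L (I ∩ L)) (xEltRel cs L (J ∩ L)) := by
  simp only [extEval, xElt_coeff, xEltRel_coeff]
  refine Eq.trans (Finset.sum_congr rfl fun w _ => ?_) (h.sum_proj_mul_proj_symm _ _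
    (fun g hg => by rw [if_neg fun hc => hg hc.1, zero_mul])
    (fun g hg => by rw [if_neg fun hc => hg hc.1, zero_mul]))
  rw [h.mem_minReps_iff, h.indTriv_eq_mul]
  by_cases hK : h.proj w ∈ minRepsRel cs K (J ∩ K) <;>
    by_cases hL : h.symm.proj w ∈ minRepsRel cs L (J ∩ L) <;> simp [hK, hL]

end CoxeterSystem.IsProductSplitting

noncomputable def extEvalBilin [Fintype W] : (W → ℚ) →ₗ[ℚ] MonoidAlgebra ℚ W →ₗ[ℚ] ℚ :=
  LinearMap.mk₂ ℚ extEval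
    (fun f g x => by simp [extEval, mul_add, Finset.sum_add_distrib])
    (fun c f x => by simp [extEval, Finset.mul_sum, mul_left_comm])
    (fun f x y => by simp [extEval, add_mul, Finset.sum_add_distrib])
    (fun c f x => by simp [extEval, Finset.mul_sum, mul_assoc])

theorem LinearMap.apply_apply_comm_of_mem_span {R M N : Type*} [CommSemiring R]
    [AddCommMonoid M] [Module R M] [AddCommMonoid N] [Module R N] (β : M →ₗ[R] M →ₗ[R] N)
    {s : Set M} (hs : ∀ x ∈ s, ∀ y ∈ s, β x y = β y x) {x y : M}
    (hx : x ∈ Submodule.span R s) (hy : y ∈ Submodule.span R s) : β x y = β y x := by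
  have hxs : ∀ y ∈ s, β x y = β y x := fun y hy =>
    LinearMap.eqOn_span (f := β.flip y) (g := β y) (fun x' hx' => hs x' hx' y hy) hx
  exact LinearMap.eqOn_span (f := β x) (g := β.flip x) hxs hy

/-- If `S = K₁ ⊔ K₂` with the simple reflections of `K₁` commuting with
those of `K₂`, and the Solomon homomorphisms of the two factors `(W_{K_p}, K_p)` have the
symmetry property, then so does the Solomon homomorphism of `(W, S)`. -/
theorem statement12 [Fintype W] (cs : CoxeterSystem M W) (K1 K2 : Set B)
    (hU : K1 ∪ K2 = Set.univ) (hD : K1 ∩ K2 = ∅)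
    (hcomm : ∀ i ∈ K1, ∀ j ∈ K2, Commute (cs.simple i) (cs.simple j))
    (Phi : MonoidAlgebra ℚ W →ₗ[ℚ] (W → ℚ))
    (hPhi : ∀ I : Set B, Phi (xElt cs I) = indTriv cs I)
    (Phi1 Phi2 : MonoidAlgebra ℚ W →ₗ[ℚ] (W → ℚ))
    (hPhi1 : ∀ I : Set B, I ⊆ K1 → Phi1 (xEltRel cs K1 I) = indTrivRel cs K1 I)
    (hPhi2 : ∀ I : Set B, I ⊆ K2 → Phi2 (xEltRel cs K2 I) = indTrivRel cs K2 I)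
    (hsym1 : ∀ x ∈ descentAlgebraRel cs K1, ∀ y ∈ descentAlgebraRel cs K1,
        extEval (Phi1 x) y = extEval (Phi1 y) x)
    (hsym2 : ∀ x ∈ descentAlgebraRel cs K2, ∀ y ∈ descentAlgebraRel cs K2,
        extEval (Phi2 x) y = extEval (Phi2 y) x) :
    ∀ x ∈ descentAlgebra cs, ∀ y ∈ descentAlgebra cs,
      extEval (Phi x) y = extEval (Phi y) x := by
  have h : cs.IsProductSplitting K1 K2 := ⟨IsCompl.of_eq hD hU, hcomm⟩
  have mem₁ (I : Set B) : xEltRel cs K1 (I ∩ K1) ∈ descentAlgebraRel cs K1 :=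
    Submodule.subset_span ⟨_, Set.inter_subset_right, rfl⟩
  have mem₂ (I : Set B) : xEltRel cs K2 (I ∩ K2) ∈ descentAlgebraRel cs K2 :=
    Submodule.subset_span ⟨_, Set.inter_subset_right, rfl⟩
  have hgen (I J : Set B) :
      extEval (Phi (xElt cs I)) (xElt cs J) = extEval (Phi (xElt cs J)) (xElt cs I) := by
    rw [hPhi, hPhi, h.extEval_indTriv_xElt, h.extEval_indTriv_xElt,
      ← hPhi1 _ Set.inter_subset_right, ← hPhi1 _ Set.inter_subset_right,
      ← hPhi2 _ Set.inter_subset_right, ← hPhi2 _ Set.inter_subset_right,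
      hsym1 _ (mem₁ I) _ (mem₁ J), hsym2 _ (mem₂ I) _ (mem₂ J)]
  intro x hx y hy
  exact (extEvalBilin ∘ₗ Phi).apply_apply_comm_of_mem_span
    (by rintro _ ⟨I, rfl⟩ _ ⟨J, rfl⟩; exact hgen I J) hx hy
end

section
/- Let (W,S) be a finite Coxeter system, I,J ⊆ S, b ∈ X_{IJ}, and w ∈ W. Then w ∈ W(I,J,b) if and only if there exist a ∈ X^I_{I ∩ bJb^{-1}}, c ∈ X^J_{J ∩ b^{-1}Ib}, and u ∈ X_I such that w = abc = uab; moreover such a, c, u are unique. -/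
open scoped Classical

variable {B : Type*} {W : Type*} [Group W] {M : CoxeterMatrix B}

/-- `X_{IJ} = X_I⁻¹ ∩ X_J`: the minimal length representatives of the double cosets
`W_I \\ W / W_J`. -/
def doubleReps (cs : CoxeterSystem M W) (I J : Set B) : Set W :=
  (minReps cs I)⁻¹ ∩ minReps cs J

/-- `W(I,J,b) = {w ∈ W | w^J b⁻¹ = (w b⁻¹)_I}`, expressed through the (unique) parabolic
components `w = u·c` (`u ∈ X_J`, `c ∈ W_J`) and `w b⁻¹ = p·q` (`p ∈ X_I`, `q ∈ W_I`). -/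
def Wset (cs : CoxeterSystem M W) (I J : Set B) (b : W) : Set W :=
  {w : W | ∃ u c p q : W,
    u ∈ minReps cs J ∧ c ∈ parabolic cs J ∧ w = u * c ∧
    p ∈ minReps cs I ∧ q ∈ parabolic cs I ∧ w * b⁻¹ = p * q ∧ u * b⁻¹ = q}

/-- The subset `I ∩ bJb⁻¹` of the simple reflections: those `i ∈ I` whose reflection is
`b`-conjugate to a simple reflection indexed by `J`. -/
def interConj (cs : CoxeterSystem M W) (I J : Set B) (b : W) : Set B :=
  {i : B | i ∈ I ∧ ∃ j ∈ J, cs.simple i = b * cs.simple j * b⁻¹}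

/-- `X^I_K = W_I ∩ X_K`: the minimal coset representatives of `W_I / W_K` for `K ⊆ I`. -/
def relReps (cs : CoxeterSystem M W) (I K : Set B) : Set W :=
  (parabolic cs I : Set W) ∩ minReps cs K

/-!
The argument runs on Tits' parity cocycle `η(w, t) ∈ ZMod 2`, the parity of the number of
occurrences of `t` in the right inversion sequence of any word for `w`. It satisfies
`η(u v, t) = η(v, t) + η(u, v t v⁻¹)`, and `η(w, sᵢ) = 1` exactly when `sᵢ` is a right descent of
`w`; this gives the length additivity `ℓ(x v) = ℓ(x) + ℓ(v)` for `x ∈ X_I`, `v ∈ W_I`, hence unique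
parabolic factorisations.

Given `w ∈ W(I,J,b)`, factor `(w b⁻¹)_I = a d` with `a ∈ X_{I ∩ bJb⁻¹}`, `d ∈ W_{I ∩ bJb⁻¹}`.
Then `w^J = (a b)(b⁻¹ d b)` with `a b ∈ X_J` and `b⁻¹ d b ∈ W_J`, so `d = 1` and `w^J = a b`; with
`c = w_J` and `u = (w b⁻¹)^I` this is `w = a b c = u a b`. A descent `sⱼ = b⁻¹ sᵢ b` of `c` would,
through the cocycle, be a descent `sᵢ` of `a`, so `c ∈ X_{J ∩ b⁻¹Ib}`. Uniqueness is that of the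
factorisation `w = (a b) c` with respect to `J`.
-/

namespace CoxeterSystem

variable (cs : CoxeterSystem M W)

local prefix:100 "s" => cs.simple
local prefix:100 "π" => cs.wordProd
local prefix:100 "ℓ" => cs.length

theorem simple_mul_mul_simple_eq_iff (i : B) (t x : W) :
    s i * t * s i = x ↔ t = s i * x * s i := by
  constructor <;> rintro rfl <;> simp [← mul_assoc]

noncomputable def reflectionPerm (i : B) : Equiv.Perm (W × ZMod 2) :=
  Function.Involutive.toPerm (fun p ↦ (s i * p.1 * s i, p.2 + if p.1 = s i then 1 else 0)) <| by
    rintro ⟨t, e⟩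
    ext
    · simp [← mul_assoc]
    · simp only [simple_mul_mul_simple_eq_iff, simple_mul_simple_self, one_mul, add_assoc]
      split_ifs <;> simp [CharTwo.add_self_eq_zero]

theorem reflectionPerm_apply (i : B) (t : W) (e : ZMod 2) :
    cs.reflectionPerm i (t, e) = (s i * t * s i, e + if t = s i then 1 else 0) := rfl

theorem reflectionPerm_mul_pow_apply (i j : B) (n : ℕ) (t : W) (e : ZMod 2) :
    ((cs.reflectionPerm i * cs.reflectionPerm j) ^ n) (t, e) =
      (((s j * s i) ^ n)⁻¹ * t * (s j * s i) ^ n,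
        e + ∑ r ∈ Finset.range (2 * n), if t = (s j * s i) ^ r * s j then 1 else 0) := by
  set g := s j * s i
  have hg : g⁻¹ = s i * s j := by simp [g]
  have hstep (t : W) (e : ZMod 2) : (cs.reflectionPerm i * cs.reflectionPerm j) (t, e) =
      (g⁻¹ * t * g, e + ((if t = s j then 1 else 0) + if t = g * s j then 1 else 0)) := by
    rw [Equiv.Perm.mul_apply, reflectionPerm_apply, reflectionPerm_apply,
      simple_mul_mul_simple_eq_iff]
    simp only [hg, g, mul_assoc, add_assoc]
  induction n generalizing t e with
  | zero => simp
  | succ n ih =>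
    have hshift (r : ℕ) : g⁻¹ * t * g = g ^ r * s j ↔ t = g ^ (r + 2) * s j := by
      have : g * (g ^ r * s j) * g⁻¹ = g ^ (r + 2) * s j := by
        rw [hg, pow_add, ← mul_assoc g, (Commute.self_pow g r).eq]
        simp only [g, mul_assoc, pow_two]
      rw [← this]
      constructor <;> intro h
      · rw [← h]; group
      · rw [h]; group
    rw [pow_succ, Equiv.Perm.mul_apply, hstep, ih, Prod.ext_iff]
    refine ⟨by group, ?_⟩
    simp only [hshift, mul_add, mul_one, Finset.sum_range_succ' _ (2 * n + 1),
      Finset.sum_range_succ' _ (2 * n), pow_zero, one_mul, zero_add, pow_one]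
    ring

/-- The `2m` reflections `(sⱼ sᵢ)ʳ sⱼ` met by `(σᵢ σⱼ)ᵐ` repeat with period `m = M i j`, so each
is met an even number of times. -/
theorem isLiftable_reflectionPerm : M.IsLiftable cs.reflectionPerm := by
  intro i j
  ext ⟨t, e⟩ : 1
  have hperiod (r : ℕ) : (s j * s i) ^ (M i j + r) = (s j * s i) ^ r := by
    rw [pow_add, simple_mul_simple_pow', one_mul]
  rw [reflectionPerm_mul_pow_apply, simple_mul_simple_pow', two_mul, Finset.sum_range_add]
  simp [hperiod, CharTwo.add_self_eq_zero]

noncomputable def reflectionRep : W →* Equiv.Perm (W × ZMod 2) :=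
  cs.lift ⟨cs.reflectionPerm, cs.isLiftable_reflectionPerm⟩

theorem reflectionRep_wordProd (ω : List B) (t : W) (e : ZMod 2) :
    cs.reflectionRep (π ω) (t, e) =
      (π ω * t * (π ω)⁻¹, e + ((cs.rightInvSeq ω).count t : ZMod 2)) := by
  induction ω generalizing t e with
  | nil => simp
  | cons i ω ih =>
    have hcond : π ω * t * (π ω)⁻¹ = s i ↔ (π ω)⁻¹ * s i * π ω = t := by
      constructor <;> intro h <;> rw [← h] <;> group
    rw [wordProd_cons, map_mul, Equiv.Perm.mul_apply, ih, reflectionRep, lift_apply_simple,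
      reflectionPerm_apply, hcond, rightInvSeq, List.count_cons]
    simp only [mul_inv_rev, inv_simple, mul_assoc, beq_iff_eq, Nat.cast_add, Nat.cast_ite,
      Nat.cast_one, Nat.cast_zero, add_assoc]

noncomputable def inversionParity (w t : W) : ZMod 2 := (cs.reflectionRep w (t, 0)).2

theorem inversionParity_wordProd (ω : List B) (t : W) :
    cs.inversionParity (π ω) t = (cs.rightInvSeq ω).count t := by
  simp [inversionParity, reflectionRep_wordProd]

theorem reflectionRep_apply (w t : W) (e : ZMod 2) :
    cs.reflectionRep w (t, e) = (w * t * w⁻¹, e + cs.inversionParity w t) := by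
  obtain ⟨ω, rfl⟩ := cs.wordProd_surjective w
  rw [reflectionRep_wordProd, inversionParity_wordProd]

theorem inversionParity_mul (u v t : W) :
    cs.inversionParity (u * v) t = cs.inversionParity v t + cs.inversionParity u (v * t * v⁻¹) := by
  show (cs.reflectionRep (u * v) (t, 0)).2 = _
  rw [map_mul, Equiv.Perm.mul_apply, reflectionRep_apply, reflectionRep_apply, zero_add]

theorem exists_eraseIdx_of_inversionParity_eq_one {ω : List B} {t : W}
    (h : cs.inversionParity (π ω) t = 1) : ∃ k < ω.length, π ω * t = π (ω.eraseIdx k) := by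
  have hmem : t ∈ cs.rightInvSeq ω := by
    rw [← List.count_pos_iff, Nat.pos_iff_ne_zero]
    rintro h0
    rw [inversionParity_wordProd, h0] at h
    exact zero_ne_one h
  obtain ⟨k, hk, rfl⟩ := List.getElem_of_mem hmem
  refine ⟨k, by simpa using hk, ?_⟩
  rw [← wordProd_mul_getD_rightInvSeq, List.getD_eq_getElem]

theorem length_mul_lt_of_inversionParity_eq_one {w t : W} (h : cs.inversionParity w t = 1) :
    ℓ (w * t) < ℓ w := by
  obtain ⟨ω, hω, rfl⟩ := cs.exists_isReduced w
  obtain ⟨k, hk, hkω⟩ := cs.exists_eraseIdx_of_inversionParity_eq_one h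
  calc ℓ (π ω * t) ≤ (ω.eraseIdx k).length := hkω ▸ cs.length_wordProd_le _
    _ < ω.length := by rw [List.length_eraseIdx_of_lt hk]; omega
    _ = ℓ (π ω) := hω.eq.symm

theorem inversionParity_simple_self (i : B) : cs.inversionParity (s i) (s i) = 1 := by
  simpa using cs.inversionParity_wordProd [i] (s i)

theorem inversionParity_simple_eq_one_iff (w : W) (i : B) :
    cs.inversionParity w (s i) = 1 ↔ cs.IsRightDescent w i := by
  refine ⟨cs.length_mul_lt_of_inversionParity_eq_one, fun hdesc ↦ ?_⟩
  by_contra hne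
  have h0 : cs.inversionParity w (s i) = 0 := by
    generalize cs.inversionParity w (s i) = x at hne
    revert x; decide
  have h1 : cs.inversionParity (w * s i) (s i) = 1 := by
    rw [inversionParity_mul, inversionParity_simple_self, inv_simple,
      simple_mul_simple_cancel_right, h0, add_zero]
  have := cs.length_mul_lt_of_inversionParity_eq_one h1
  rw [simple_mul_simple_cancel_right] at this
  exact (lt_asymm hdesc) this

theorem inversionParity_simple_eq_zero_iff (w : W) (i : B) :
    cs.inversionParity w (s i) = 0 ↔ ¬ cs.IsRightDescent w i := by
  rw [← inversionParity_simple_eq_one_iff]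
  generalize cs.inversionParity w (s i) = x
  revert x; decide

variable {I : Set B}

theorem parabolic_mono {K : Set B} (h : K ⊆ I) : parabolic cs K ≤ parabolic cs I :=
  Subgroup.closure_mono (Set.image_mono h)

theorem simple_mem_parabolic {i : B} (hi : i ∈ I) : s i ∈ parabolic cs I :=
  Subgroup.subset_closure ⟨i, hi, rfl⟩

theorem wordProd_mem_parabolic {ω : List B} (hω : ∀ i ∈ ω, i ∈ I) : π ω ∈ parabolic cs I :=
  Subgroup.list_prod_mem _ (by simpa using fun i hi ↦ cs.simple_mem_parabolic (hω i hi))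

theorem exists_isReduced_mul_simple {ω : List B} (hω : cs.IsReduced ω) (hωI : ∀ j ∈ ω, j ∈ I)
    {i : B} (hi : i ∈ I) :
    ∃ ω', cs.IsReduced ω' ∧ (∀ j ∈ ω', j ∈ I) ∧ π ω * s i = π ω' := by
  by_cases hdesc : cs.IsRightDescent (π ω) i
  · obtain ⟨k, hk, hkω⟩ := cs.exists_eraseIdx_of_inversionParity_eq_one
      ((cs.inversionParity_simple_eq_one_iff _ _).mpr hdesc)
    refine ⟨ω.eraseIdx k, ?_, fun j hj ↦ hωI j (List.mem_of_mem_eraseIdx hj), hkω⟩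
    have := cs.isRightDescent_iff.mp hdesc
    rw [IsReduced, ← hkω, List.length_eraseIdx_of_lt hk, ← hω.eq]
    omega
  · refine ⟨ω.concat i, ?_, by simpa [or_imp, forall_and] using ⟨hωI, hi⟩,
      (cs.wordProd_concat i ω).symm⟩
    rw [IsReduced, wordProd_concat, cs.not_isRightDescent_iff.mp hdesc, hω.eq, List.length_concat]

theorem exists_isReduced_of_mem_parabolic {w : W} (hw : w ∈ parabolic cs I) :
    ∃ ω, cs.IsReduced ω ∧ (∀ i ∈ ω, i ∈ I) ∧ w = π ω := by
  induction hw using Subgroup.closure_induction_right with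
  | one => exact ⟨[], by simp [IsReduced], by simp, rfl⟩
  | mul_right x _ y hy ih
  | mul_inv_cancel x _ y hy ih =>
    obtain ⟨i, hi, rfl⟩ := hy
    obtain ⟨ω, hω, hωI, rfl⟩ := ih
    simpa [eq_comm] using cs.exists_isReduced_mul_simple hω hωI hi

theorem exists_isRightDescent_of_mem_parabolic {w : W} (hw : w ∈ parabolic cs I) (hne : w ≠ 1) :
    ∃ i ∈ I, cs.IsRightDescent w i := by
  obtain ⟨ω, hω, hωI, rfl⟩ := cs.exists_isReduced_of_mem_parabolic hw
  obtain rfl | ⟨α, i, rfl⟩ := List.eq_nil_or_concat' ω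
  · exact absurd cs.wordProd_nil hne
  refine ⟨i, hωI i (by simp), ?_⟩
  have := cs.length_wordProd_le α
  rw [IsRightDescent, hω.eq, wordProd_append, wordProd_singleton, simple_mul_simple_cancel_right,
    List.length_append, List.length_singleton]
  omega

theorem exists_forall_length_le_mul (w : W) :
    ∃ v ∈ parabolic cs I, ∀ v' ∈ parabolic cs I, ℓ (w * v) ≤ ℓ (w * v * v') := by
  refine ⟨Function.argminOn (fun v ↦ ℓ (w * v)) (parabolic cs I : Set W) ⟨1, one_mem _⟩,
    Function.argminOn_mem _ _ _, fun v' hv' ↦ ?_⟩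
  rw [mul_assoc]
  exact Function.argminOn_le (fun v ↦ ℓ (w * v)) _ (mul_mem (Function.argminOn_mem _ _ _) hv')

/-- If `sᵢ` is a descent of `x v` but not of `v`, the cocycle makes `v sᵢ v⁻¹ ∈ W_I` an inversion
of `x`. -/
theorem length_mul_eq_add_of_forall_length_le {x : W}
    (hmin : ∀ v ∈ parabolic cs I, ℓ x ≤ ℓ (x * v)) {v : W} (hv : v ∈ parabolic cs I) :
    ℓ (x * v) = ℓ x + ℓ v := by
  induction hn : ℓ v generalizing v with
  | zero => simp [cs.length_eq_zero_iff.mp hn]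
  | succ n ih =>
    obtain ⟨i, hi, hdesc⟩ := cs.exists_isRightDescent_of_mem_parabolic hv
      (fun h ↦ by simp [h] at hn)
    obtain ⟨v', rfl⟩ : ∃ v', v = v' * s i := ⟨v * s i, by simp⟩
    rw [IsRightDescent, simple_mul_simple_cancel_right] at hdesc
    have hv' : v' ∈ parabolic cs I := by simpa using mul_mem hv (cs.simple_mem_parabolic hi)
    have hlen : ℓ v' = n := by have := cs.length_mul_simple v' i; omega
    have hasc : ¬ cs.IsRightDescent (x * v') i := by
      intro h
      have h0 : cs.inversionParity v' (s i) = 0 := by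
        rw [inversionParity_simple_eq_zero_iff, IsRightDescent]
        omega
      have h1 := (cs.inversionParity_simple_eq_one_iff _ _).mpr h
      rw [inversionParity_mul, h0, zero_add] at h1
      have := cs.length_mul_lt_of_inversionParity_eq_one h1
      exact this.not_ge (hmin _ (mul_mem (mul_mem hv' (cs.simple_mem_parabolic hi)) (inv_mem hv')))
    rw [← mul_assoc, cs.not_isRightDescent_iff.mp hasc, ih hv' hlen]
    omega

theorem eq_one_of_mul_mem_minReps {x d : W}
    (hx : ∀ v ∈ parabolic cs I, ℓ (x * v) = ℓ x + ℓ v) (hd : d ∈ parabolic cs I)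
    (hxd : x * d ∈ minReps cs I) : d = 1 := by
  by_contra hne
  obtain ⟨i, hi, hdesc⟩ := cs.exists_isRightDescent_of_mem_parabolic hd hne
  have := hxd i hi
  rw [mul_assoc, hx _ (mul_mem hd (cs.simple_mem_parabolic hi)), hx _ hd] at this
  exact (lt_asymm hdesc) (by omega)

theorem length_mul_of_mem_minReps {x : W} (hx : x ∈ minReps cs I) {v : W}
    (hv : v ∈ parabolic cs I) : ℓ (x * v) = ℓ x + ℓ v := by
  obtain ⟨v₀, hv₀, hmin⟩ := cs.exists_forall_length_le_mul (I := I) x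
  have hadd : ∀ v ∈ parabolic cs I, ℓ (x * v₀ * v) = ℓ (x * v₀) + ℓ v :=
    fun _ ↦ cs.length_mul_eq_add_of_forall_length_le hmin
  have : v₀⁻¹ = 1 := cs.eq_one_of_mul_mem_minReps hadd (inv_mem hv₀) (by simpa using hx)
  simpa [inv_eq_one.mp this] using hadd _ hv

theorem length_mul_of_inv_mem_minReps {b : W} (hb : b⁻¹ ∈ minReps cs I) {v : W}
    (hv : v ∈ parabolic cs I) : ℓ (v * b) = ℓ v + ℓ b := by
  rw [← length_inv, mul_inv_rev, cs.length_mul_of_mem_minReps hb (inv_mem hv), length_inv,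
    length_inv, add_comm]

theorem exists_minReps_mul (w : W) :
    ∃ x ∈ minReps cs I, ∃ v ∈ parabolic cs I, w = x * v := by
  obtain ⟨v, hv, hmin⟩ := cs.exists_forall_length_le_mul (I := I) w
  refine ⟨w * v, fun i hi ↦ ?_, v⁻¹, inv_mem hv, by group⟩
  exact lt_of_le_of_ne (hmin _ (cs.simple_mem_parabolic hi)) (cs.length_mul_simple_ne _ i).symm

theorem minReps_mul_inj {x x' v v' : W} (hx : x ∈ minReps cs I) (hx' : x' ∈ minReps cs I)
    (hv : v ∈ parabolic cs I) (hv' : v' ∈ parabolic cs I) (h : x * v = x' * v') :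
    x = x' ∧ v = v' := by
  have hx'eq : x' = x * (v * v'⁻¹) := by rw [← mul_assoc, h]; group
  have h1 : v * v'⁻¹ = 1 := cs.eq_one_of_mul_mem_minReps
    (fun _ ↦ cs.length_mul_of_mem_minReps hx) (mul_mem hv (inv_mem hv')) (hx'eq ▸ hx')
  rw [mul_inv_eq_one] at h1
  subst h1
  exact ⟨mul_right_cancel h, rfl⟩

theorem mem_parabolic_of_inversionParity_eq_one {w t : W} (hw : w ∈ parabolic cs I)
    (h : cs.inversionParity w t = 1) : t ∈ parabolic cs I := by
  obtain ⟨ω, -, hωI, rfl⟩ := cs.exists_isReduced_of_mem_parabolic hw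
  obtain ⟨k, -, hk⟩ := cs.exists_eraseIdx_of_inversionParity_eq_one h
  rw [← inv_mul_cancel_left (π ω) t, hk]
  exact mul_mem (inv_mem hw)
    (cs.wordProd_mem_parabolic fun i hi ↦ hωI i (List.mem_of_mem_eraseIdx hi))

theorem exists_eq_simple_of_mem_parabolic {t : W} (ht : t ∈ parabolic cs I) (h1 : ℓ t = 1) :
    ∃ i ∈ I, t = s i := by
  obtain ⟨i, hi, hdesc⟩ := cs.exists_isRightDescent_of_mem_parabolic ht
    (fun h ↦ by simp [h] at h1)
  rw [IsRightDescent, h1, Nat.lt_one_iff, length_eq_zero_iff, mul_eq_one_iff_eq_inv,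
    inv_simple] at hdesc
  exact ⟨i, hi, hdesc⟩

variable {J : Set B} {b : W}

theorem conj_mem_parabolic_interConj {d : W} (hd : d ∈ parabolic cs (interConj cs I J b)) :
    b⁻¹ * d * b ∈ parabolic cs (interConj cs J I b⁻¹) := by
  suffices parabolic cs (interConj cs I J b) ≤
      (parabolic cs (interConj cs J I b⁻¹)).comap (MulAut.conj b⁻¹).toMonoidHom by
    simpa using this hd
  rw [parabolic, Subgroup.closure_le]
  rintro _ ⟨i, ⟨hiI, j, hjJ, hij⟩, rfl⟩
  have hji : b⁻¹ * s i * b = s j := by rw [hij]; group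
  have hj : j ∈ interConj cs J I b⁻¹ := ⟨hjJ, i, hiI, by rw [← hji]; group⟩
  simpa [hji] using cs.simple_mem_parabolic hj

/-- The inversion of `a b` at `j ∈ J` would be the inversion `b sⱼ b⁻¹` of `a`, which lies in
`W_I` and has length one because `b⁻¹ ∈ X_I`, so is a simple reflection `sᵢ` with
`i ∈ I ∩ bJb⁻¹`. -/
theorem mul_mem_minReps_of_mem_relReps (hb : b ∈ doubleReps cs I J) {a : W}
    (ha : a ∈ relReps cs I (interConj cs I J b)) : a * b ∈ minReps cs J := by
  intro j hj
  by_contra hasc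
  have hdesc : cs.IsRightDescent (a * b) j := by
    have := cs.length_mul_simple_ne (a * b) j
    rw [IsRightDescent]; omega
  have hbj : cs.inversionParity b (s j) = 0 := by
    rw [inversionParity_simple_eq_zero_iff, IsRightDescent]
    exact (hb.2 j hj).not_gt
  have hat : cs.inversionParity a (b * s j * b⁻¹) = 1 := by
    rw [← (cs.inversionParity_simple_eq_one_iff _ _).mpr hdesc, inversionParity_mul, hbj, zero_add]
  have htI := cs.mem_parabolic_of_inversionParity_eq_one ha.1 hat
  have hlen : ℓ (b * s j * b⁻¹) = 1 := by
    have h := cs.length_mul_of_inv_mem_minReps (Set.mem_inv.mp hb.1) htI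
    rw [inv_mul_cancel_right, cs.not_isRightDescent_iff.mp (hb.2 j hj).not_gt] at h
    omega
  obtain ⟨i, hi, hij⟩ := cs.exists_eq_simple_of_mem_parabolic htI hlen
  have := ha.2 i ⟨hi, j, hj, hij.symm⟩
  rw [← hij] at this
  exact this.not_gt (cs.length_mul_lt_of_inversionParity_eq_one hat)

/-- For `sⱼ = b⁻¹ sᵢ b`, the cocycle reduces the parity of `sⱼ` as an inversion of `p a b` to that
of `sᵢ` for `p a`, which is zero as `i ∈ I ∩ bJb⁻¹`; since `a b c` is length-additive, `sⱼ` is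
then no descent of `c`. -/
theorem mem_minReps_interConj_of_mul_eq (hb : b ∈ doubleReps cs I J) {p a c : W}
    (hp : p ∈ minReps cs I) (ha : a ∈ relReps cs I (interConj cs I J b))
    (hc : c ∈ parabolic cs J) (h : a * b * c = p * a * b) :
    c ∈ minReps cs (interConj cs J I b⁻¹) := by
  rintro j ⟨hjJ, i, hiI, hji⟩
  have hij : b * s j * b⁻¹ = s i := by rw [hji]; group
  have hpa : ¬ cs.IsRightDescent (p * a) i := by
    have hai := ha.2 i ⟨hiI, j, hjJ, hij.symm⟩
    rw [IsRightDescent, mul_assoc, cs.length_mul_of_mem_minReps hp ha.1,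
      cs.length_mul_of_mem_minReps hp (mul_mem ha.1 (cs.simple_mem_parabolic hiI))]
    omega
  have hw : ¬ cs.IsRightDescent (a * b * c) j := by
    rw [← inversionParity_simple_eq_zero_iff, h, inversionParity_mul, hij,
      (cs.inversionParity_simple_eq_zero_iff _ _).mpr hpa, add_zero,
      inversionParity_simple_eq_zero_iff, IsRightDescent]
    exact (hb.2 j hjJ).not_gt
  have hab := cs.mul_mem_minReps_of_mem_relReps hb ha
  rw [IsRightDescent, mul_assoc, cs.length_mul_of_mem_minReps hab hc,
    cs.length_mul_of_mem_minReps hab (mul_mem hc (cs.simple_mem_parabolic hjJ))] at hw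
  have := cs.length_mul_simple_ne c j
  omega

theorem exists_factorization_of_mem_Wset (hb : b ∈ doubleReps cs I J) {w : W}
    (hw : w ∈ Wset cs I J b) :
    ∃ a c u : W, a ∈ relReps cs I (interConj cs I J b) ∧
      c ∈ relReps cs J (interConj cs J I b⁻¹) ∧ u ∈ minReps cs I ∧
      w = a * b * c ∧ w = u * a * b := by
  obtain ⟨u₀, c, p, q, hu₀, hc, rfl, hp, hq, hwb, rfl⟩ := hw
  obtain ⟨a, haK, d, hdK, hqad⟩ := cs.exists_minReps_mul (I := interConj cs I J b) (u₀ * b⁻¹)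
  have hKI : interConj cs I J b ⊆ I := fun _ hi ↦ hi.1
  have ha : a ∈ relReps cs I (interConj cs I J b) := by
    refine ⟨?_, haK⟩
    rw [eq_mul_inv_of_mul_eq hqad.symm]
    exact mul_mem hq (inv_mem (cs.parabolic_mono hKI hdK))
  have hab := cs.mul_mem_minReps_of_mem_relReps hb ha
  have hu₀ad : u₀ = a * d * b := by rw [← hqad]; group
  obtain ⟨rfl, hd⟩ : u₀ = a * b ∧ 1 = b⁻¹ * d * b :=
    cs.minReps_mul_inj hu₀ hab (one_mem _)
      (cs.parabolic_mono (fun _ hj ↦ hj.1) (cs.conj_mem_parabolic_interConj hdK))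
      (by rw [hu₀ad]; group)
  obtain rfl : d = 1 := by simpa [mul_assoc, eq_comm] using congrArg (b * · * b⁻¹) hd
  have hpab : a * b * c = p * a * b := by
    rw [← inv_mul_cancel_right (a * b * c) b, hwb]
    group
  exact ⟨a, c, p, ha, ⟨hc, cs.mem_minReps_interConj_of_mul_eq hb hp ha hc hpab⟩, hp, rfl, hpab⟩

theorem mul_mem_Wset (hb : b ∈ doubleReps cs I J) {a c u : W}
    (ha : a ∈ relReps cs I (interConj cs I J b)) (hc : c ∈ parabolic cs J)
    (hu : u ∈ minReps cs I) (h : a * b * c = u * a * b) : a * b * c ∈ Wset cs I J b :=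
  ⟨a * b, c, u, a, cs.mul_mem_minReps_of_mem_relReps hb ha, hc, rfl, hu, ha.1,
    by rw [h]; group, by group⟩

theorem relReps_mul_mul_inj (hb : b ∈ doubleReps cs I J) {a a' c c' : W}
    (ha : a ∈ relReps cs I (interConj cs I J b)) (ha' : a' ∈ relReps cs I (interConj cs I J b))
    (hc : c ∈ parabolic cs J) (hc' : c' ∈ parabolic cs J) (h : a * b * c = a' * b * c') :
    a = a' ∧ c = c' := by
  obtain ⟨hab, rfl⟩ := cs.minReps_mul_inj (cs.mul_mem_minReps_of_mem_relReps hb ha)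
    (cs.mul_mem_minReps_of_mem_relReps hb ha') hc hc' h
  exact ⟨mul_right_cancel hab, rfl⟩

end CoxeterSystem

theorem statement15_general (cs : CoxeterSystem M W) (I J : Set B) (b : W)
    (hb : b ∈ doubleReps cs I J) (w : W) :
    (w ∈ Wset cs I J b ↔ ∃ a c u : W,
        a ∈ relReps cs I (interConj cs I J b) ∧
        c ∈ relReps cs J (interConj cs J I b⁻¹) ∧
        u ∈ minReps cs I ∧ w = a * b * c ∧ w = u * a * b) ∧
    (∀ a c u a' c' u' : W,
        (a ∈ relReps cs I (interConj cs I J b) ∧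
          c ∈ relReps cs J (interConj cs J I b⁻¹) ∧
          u ∈ minReps cs I ∧ w = a * b * c ∧ w = u * a * b) →
        (a' ∈ relReps cs I (interConj cs I J b) ∧
          c' ∈ relReps cs J (interConj cs J I b⁻¹) ∧
          u' ∈ minReps cs I ∧ w = a' * b * c' ∧ w = u' * a' * b) →
        a = a' ∧ c = c' ∧ u = u') := by
  refine ⟨⟨cs.exists_factorization_of_mem_Wset hb, ?_⟩, ?_⟩
  · rintro ⟨a, c, u, ha, hc, hu, rfl, h⟩
    exact cs.mul_mem_Wset hb ha hc.1 hu h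
  · rintro a c u a' c' u' ⟨ha, hc, -, rfl, h⟩ ⟨ha', hc', -, h', h''⟩
    obtain ⟨rfl, rfl⟩ := cs.relReps_mul_mul_inj hb ha ha' hc.1 hc'.1 h'
    exact ⟨rfl, rfl, mul_right_cancel (mul_right_cancel (h.symm.trans h''))⟩

/-- For `b ∈ X_{IJ}`: `w ∈ W(I,J,b)` iff there exist
`a ∈ X^I_{I ∩ bJb⁻¹}`, `c ∈ X^J_{J ∩ b⁻¹Ib}` and `u ∈ X_I` with `w = abc = uab`;
moreover such `a, c, u` are unique. -/
theorem statement15 [Fintype W] (cs : CoxeterSystem M W) (I J : Set B) (b : W)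
    (hb : b ∈ doubleReps cs I J) (w : W) :
    (w ∈ Wset cs I J b ↔ ∃ a c u : W,
        a ∈ relReps cs I (interConj cs I J b) ∧
        c ∈ relReps cs J (interConj cs J I b⁻¹) ∧
        u ∈ minReps cs I ∧ w = a * b * c ∧ w = u * a * b) ∧
    (∀ a c u a' c' u' : W,
        (a ∈ relReps cs I (interConj cs I J b) ∧
          c ∈ relReps cs J (interConj cs J I b⁻¹) ∧
          u ∈ minReps cs I ∧ w = a * b * c ∧ w = u * a * b) →
        (a' ∈ relReps cs I (interConj cs I J b) ∧
          c' ∈ relReps cs J (interConj cs J I b⁻¹) ∧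
          u' ∈ minReps cs I ∧ w = a' * b * c' ∧ w = u' * a' * b) →
        a = a' ∧ c = c' ∧ u = u') :=
  statement15_general cs I J b hb w
end
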